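/- Let (X, d) be a strictly intrinsic metric space (every pair of points of X is joined by a geodesic), K ∈ ℝ, N < 0, and let f : X → [−∞,+∞] be lower semicontinuous with D[f] dense in X. If for every y₀ ∈ {x ∈ X : f(x) > −∞} there exists an EVI_{K,N} gradient curve (y_t)_{t∈(0,T)} for f starting from y₀, then f is (K,N)-convex. -/

import Mathlib

open Filter MeasureTheory Set
open scoped ENNReal Topology

noncomputable section

namespace KNPaper

variable {X : Type*} [MetricSpace X]

/-- A geodesic parametrized on `[0,1]`: `d(γ s, γ t) = |t - s| * d(γ 0, γ 1)`. -/
def IsGeodesic (γ : ℝ → X) : Prop :=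
  ∀ s ∈ Set.Icc (0:ℝ) 1, ∀ t ∈ Set.Icc (0:ℝ) 1,
    dist (γ s) (γ t) = |t - s| * dist (γ 0) (γ 1)

/-- Extended exponential `EReal → ℝ≥0∞`, with `exp ⊥ = 0` and `exp ⊤ = ⊤`. -/
def eexp (x : EReal) : ℝ≥0∞ :=
  if x = ⊤ then ⊤ else if x = ⊥ then 0 else ENNReal.ofReal (Real.exp x.toReal)

/-- The nonnegative part of an extended real, valued in `ℝ≥0∞`. -/
def epos (x : EReal) : ℝ≥0∞ :=
  if x = ⊤ then ⊤ else ENNReal.ofReal x.toReal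

/-- `f_N := exp (-f/N)`, with the conventions `exp(-∞) = 0`, `exp(+∞) = +∞`. -/
def fN (f : X → EReal) (N : ℝ) (x : X) : ℝ≥0∞ :=
  eexp (((-1/N : ℝ) : EReal) * f x)

/-- The finiteness domain `D[f]`. -/
def Dom (f : X → EReal) : Set X := {x | f x ≠ ⊤ ∧ f x ≠ ⊥}

/-- The extended domain `D*[f]`. -/
def DomStar (f : X → EReal) : Set X := {x | f x ≠ ⊤}

/-- The function `𝔰_{K,N}`. -/
def sKN (K N θ : ℝ) : ℝ :=
  if K < 0 then Real.sin (θ * Real.sqrt (K/N)) / Real.sqrt (K/N)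
  else if K = 0 then θ
  else Real.sinh (θ * Real.sqrt (-K/N)) / Real.sqrt (-K/N)

/-- The function `𝔠_{K,N}`. -/
def cKN (K N θ : ℝ) : ℝ :=
  if K < 0 then Real.cos (θ * Real.sqrt (K/N))
  else if K = 0 then 1
  else Real.cosh (θ * Real.sqrt (-K/N))

/-- The distortion coefficient `σ_{K,N}^{(t)}(θ)`, valued in `[0,∞]`. -/
def sigmaKN (K N t θ : ℝ) : ℝ≥0∞ :=
  if (N * Real.pi ^ 2 < K * θ ^ 2 ∧ K * θ ^ 2 < 0) ∨ 0 < K * θ ^ 2 then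
    ENNReal.ofReal (sKN K N (t * θ) / sKN K N θ)
  else if K * θ ^ 2 = 0 then ENNReal.ofReal t
  else ⊤

/-- `(K,N)`-convexity of `f` on a subset `s` (with `N < 0`). -/
def KNConvexOn (f : X → EReal) (K N : ℝ) (s : Set X) : Prop :=
  ∀ x₀ ∈ s, ∀ x₁ ∈ s, f x₀ ≠ ⊤ → f x₁ ≠ ⊤ →
    (K < 0 → dist x₀ x₁ < Real.pi * Real.sqrt (N / K)) →
    ∃ γ : ℝ → X, IsGeodesic γ ∧ (∀ t ∈ Set.Icc (0:ℝ) 1, γ t ∈ s) ∧ γ 0 = x₀ ∧ γ 1 = x₁ ∧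
      ∀ t ∈ Set.Icc (0:ℝ) 1,
        fN f N (γ t) ≤ sigmaKN K N (1 - t) (dist x₀ x₁) * fN f N x₀
          + sigmaKN K N t (dist x₀ x₁) * fN f N x₁

/-- `(K,N)`-convexity of `f` (with `N < 0`). -/
def KNConvex (f : X → EReal) (K N : ℝ) : Prop := KNConvexOn f K N Set.univ

/-- `λ`-convexity of an extended-real-valued function along geodesics. -/
def LambdaConvex (g : X → EReal) (lam : ℝ) : Prop :=
  ∀ x₀ x₁ : X, x₀ ∈ Dom g → x₁ ∈ Dom g →
    ∃ γ : ℝ → X, IsGeodesic γ ∧ γ 0 = x₀ ∧ γ 1 = x₁ ∧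
      ∀ t ∈ Set.Icc (0:ℝ) 1,
        g (γ t) ≤ (((1 - t) * (g x₀).toReal + t * (g x₁).toReal
          - lam / 2 * (t * (1 - t)) * dist x₀ x₁ ^ 2 : ℝ) : EReal)

/-- Upper right Dini derivative of a real function, valued in `EReal`. -/
def diniUR (g : ℝ → ℝ) (t : ℝ) : EReal :=
  Filter.limsup (fun h : ℝ => (((g (t + h) - g t) / h : ℝ) : EReal)) (𝓝[>] (0:ℝ))

/-- The time interval `(0,T)` for `T ∈ (0,∞]`, as a set of reals. -/
def domT (T : ℝ≥0∞) : Set ℝ := {t : ℝ | 0 < t ∧ ENNReal.ofReal t < T}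

/-- `EVI_λ` gradient curve for `g` on `(0,T)`. -/
def IsEVIlam (g : X → EReal) (lam : ℝ) (T : ℝ≥0∞) (z : ℝ → X) : Prop :=
  0 < T ∧ ContinuousOn z (domT T) ∧ (∀ t ∈ domT T, z t ∈ Dom g) ∧
    ∀ t ∈ domT T, ∀ x ∈ Dom g,
      diniUR (fun s => dist (z s) x ^ 2 / 2) t + ((lam / 2 * dist (z t) x ^ 2 : ℝ) : EReal)
        ≤ (((g x).toReal - (g (z t)).toReal : ℝ) : EReal)

/-- `EVI_{K,N}` gradient curve for `f` on `(0,T)` (with `N < 0`). -/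
def IsEVIKN (f : X → EReal) (K N : ℝ) (T : ℝ≥0∞) (y : ℝ → X) : Prop :=
  0 < T ∧ ContinuousOn y (domT T) ∧ (∀ t ∈ domT T, y t ∈ Dom f) ∧
    ∀ t ∈ domT T, ∀ x ∈ closure (Dom f),
      (K < 0 → dist (y t) x < Real.pi * Real.sqrt (N / K)) →
      diniUR (fun s => sKN K N (dist (y s) x / 2) ^ 2) t
          + ((K * sKN K N (dist (y t) x / 2) ^ 2 : ℝ) : EReal)
        ≤ ((N / 2 : ℝ) : EReal) * (1 - ((fN f N x / fN f N (y t) : ℝ≥0∞) : EReal))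

/-- A curve starts at `y₀` if `y_t → y₀` as `t ↓ 0`. -/
def StartsAt (y : ℝ → X) (y₀ : X) : Prop := Filter.Tendsto y (𝓝[>] (0:ℝ)) (𝓝 y₀)

/-- The class `𝒞` of continuous curves on `(0,T)` with values in `D[f]`. -/
def InC (f : X → EReal) (T : ℝ≥0∞) (y : ℝ → X) : Prop :=
  0 < T ∧ ContinuousOn y (domT T) ∧ ∀ t ∈ domT T, y t ∈ Dom f

/-- The class `𝒞'`: curves in `𝒞` along which `f` is non-increasing. -/
def InC' (f : X → EReal) (T : ℝ≥0∞) (y : ℝ → X) : Prop :=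
  InC f T y ∧ ∀ s ∈ domT T, ∀ t ∈ domT T, s ≤ t → f (y t) ≤ f (y s)

/-- The class `𝒞''_N`: curves in `𝒞'` with `∫₀^{min(T,1)} f_N(y_t) dt < ∞`. -/
def InC'' (f : X → EReal) (N : ℝ) (T : ℝ≥0∞) (y : ℝ → X) : Prop :=
  InC' f T y ∧ ∫⁻ t in Set.Ioo (0:ℝ) ((min T 1).toReal), fN f N (y t) < ⊤

/-- The function `α(t) = -N ∫₀ᵗ f_N(y_r)⁻¹ dr`. -/
def alphaMap (f : X → EReal) (N : ℝ) (y : ℝ → X) (t : ℝ) : ℝ :=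
  -N * ∫ r in Set.Ioo (0:ℝ) t, ((fN f N (y r))⁻¹).toReal

/-- The final time `T' = lim_{t→T⁻} α(t)` of the reparametrized curve `ℛ₁(y)`. -/
def R1T (f : X → EReal) (N : ℝ) (T : ℝ≥0∞) (y : ℝ → X) : ℝ≥0∞ :=
  ⨆ t ∈ domT T, ENNReal.ofReal (alphaMap f N y t)

/-- The reparametrized curve `ℛ₁(y) = y ∘ φ`, `φ = α⁻¹`. -/
def R1fun (f : X → EReal) (N : ℝ) (T : ℝ≥0∞) (y : ℝ → X) : ℝ → X :=
  y ∘ Function.invFunOn (alphaMap f N y) (domT T)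

/-- The function `β(s) = -(1/N) ∫₀ˢ f_N(z_r) dr`. -/
def betaMap (f : X → EReal) (N : ℝ) (z : ℝ → X) (s : ℝ) : ℝ :=
  -(1/N) * ∫ r in Set.Ioo (0:ℝ) s, (fN f N (z r)).toReal

/-- The final time `T = lim_{s→T'⁻} β(s)` of the reparametrized curve `ℛ₂(z)`. -/
def R2T (f : X → EReal) (N : ℝ) (T' : ℝ≥0∞) (z : ℝ → X) : ℝ≥0∞ :=
  ⨆ s ∈ domT T', ENNReal.ofReal (betaMap f N z s)

/-- The reparametrized curve `ℛ₂(z) = z ∘ ψ`, `ψ = β⁻¹`. -/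
def R2fun (f : X → EReal) (N : ℝ) (T' : ℝ≥0∞) (z : ℝ → X) : ℝ → X :=
  z ∘ Function.invFunOn (betaMap f N z) (domT T')

/-- The descending slope `|D⁻f|(y) = limsup_{z→y} (f(y)-f(z))⁺ / d(z,y)`, in `[0,∞]`. -/
def descSlope (f : X → EReal) (y : X) : ℝ≥0∞ :=
  Filter.limsup (fun z : X => epos (f y - f z) / ENNReal.ofReal (dist z y)) (𝓝[≠] y)

/-- Directional derivative `g'(γ 0; ·) = liminf_{t↓0} (g(γ t) - g(γ 0))/t` along a curve. -/
def dirDeriv (g : X → EReal) (γ : ℝ → X) : EReal :=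
  Filter.liminf (fun t : ℝ => (g (γ t) - g (γ 0)) * (((1/t : ℝ)) : EReal)) (𝓝[>] (0:ℝ))

/-- The quantity `[ẏ, z]_{t₀} = sup_{0<s≤1} (1/(2s)) (d⁺/dt)|_{t₀} d(y_t, z_s)²`. -/
def bracket (y z : ℝ → X) (t₀ : ℝ) : EReal :=
  ⨆ s ∈ Set.Ioc (0:ℝ) 1,
    (((1 / (2 * s) : ℝ)) : EReal) * diniUR (fun t => dist (y t) (z s) ^ 2) t₀

/-- Metric speed `|γ̇|(t) = lim_{h→0} d(γ(t+h), γ(t))/|h| = v`. -/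
def HasMetricSpeedAt (γ : ℝ → X) (t v : ℝ) : Prop :=
  Filter.Tendsto (fun h : ℝ => dist (γ (t + h)) (γ t) / |h|) (𝓝[≠] (0:ℝ)) (𝓝 v)

open Classical in
/-- The metric speed of a curve at a time (defaulting to `0` when it does not exist). -/
def metricSpeed (γ : ℝ → X) (t : ℝ) : ℝ :=
  if h : ∃ v, HasMetricSpeedAt γ t v then h.choose else 0

/-- Metric absolute continuity on `[s,t]` with derivative control in `Lᵖ`. -/
def MetricACWith (p : ℝ≥0∞) (γ : ℝ → X) (s t : ℝ) : Prop :=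
  ∃ g : ℝ → ℝ, MeasureTheory.MemLp g p (MeasureTheory.volume.restrict (Set.Icc s t)) ∧
    ∀ u ∈ Set.Icc s t, ∀ v ∈ Set.Icc s t, u ≤ v → dist (γ u) (γ v) ≤ ∫ r in u..v, g r

/-- `ACᵖ_loc` on a set: metric absolute continuity on every compact subinterval. -/
def LocACOn (p : ℝ≥0∞) (γ : ℝ → X) (I : Set ℝ) : Prop :=
  ∀ s t : ℝ, s ≤ t → Set.Icc s t ⊆ I → MetricACWith p γ s t

/-- Curve of maximal slope for `f` on `(0,T)`. -/
def IsMaxSlopeCurve (f : X → EReal) (T : ℝ≥0∞) (y : ℝ → X) : Prop :=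
  0 < T ∧ (∀ t ∈ domT T, y t ∈ Dom f) ∧
  LocACOn 1 y (domT T) ∧
  LocACOn 1 (fun t => (f (y t)).toReal) (domT T) ∧
  (∀ᵐ t ∂(MeasureTheory.volume.restrict (domT T)), ∃ v : ℝ, HasMetricSpeedAt y t v) ∧
  ∀ᵐ t ∂(MeasureTheory.volume.restrict (domT T)),
    ∃ d : ℝ, HasDerivAt (fun s => (f (y s)).toReal) d t ∧
      ENNReal.ofReal (2⁻¹ * metricSpeed y t ^ 2) + 2⁻¹ * descSlope f (y t) ^ 2
        ≤ ENNReal.ofReal (-d)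

end KNPaper

/-!
Let `θ = d(x₀, x₁)`, `γ` a geodesic from `x₀` to `x₁`, `s ∈ [0,1]`, `p = sθ`, `q = (1-s)θ`, and
write `𝔰` for `𝔰_{K,N}`. By a trigonometric identity and the triangle inequality, `γ s` minimizes
`G(u) = 𝔰(q) 𝔰(d(u,x₀)/2)² + 𝔰(p) 𝔰(d(u,x₁)/2)²` among admissible points. Run the EVI curve from
`γ s`. If the convexity inequality failed at `γ s`, lower semicontinuity would keep `f_N` along
the curve above a level at which the two EVI inequalities for `x₀` and `x₁`, added with weights
`𝔰(q)` and `𝔰(p)`, force `G` to decrease at a definite rate, taking it below its minimum. The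
identity `𝔰(q) + 𝔰(p) - 2(K/N) G(γ s) = 𝔰(θ)` turns the weights into the distortion coefficients
`σ^{(1-s)}(θ)` and `σ^{(s)}(θ)`.
-/

namespace KNPaper

open Real

section Trigonometry

variable {K N : ℝ}

/- Apart from positivity and continuity, only the next four lemmas split on the sign of `K`:
`𝔰, 𝔠` obey the addition formulas of `sin, cos` with `𝔠² + (K/N) 𝔰² = 1`, and every other identity
is derived from these uniformly. -/

lemma sKN_add (x y : ℝ) : sKN K N (x + y) = sKN K N x * cKN K N y + cKN K N x * sKN K N y := by
  rcases lt_trichotomy K 0 with hK | rfl | hK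
  · simp only [sKN, cKN, if_pos hK, add_mul, sin_add]; ring
  · simp [sKN, cKN]
  · simp only [sKN, cKN, if_neg hK.not_gt, if_neg hK.ne', add_mul, sinh_add]; ring

lemma sKN_sub (x y : ℝ) : sKN K N (x - y) = sKN K N x * cKN K N y - cKN K N x * sKN K N y := by
  rcases lt_trichotomy K 0 with hK | rfl | hK
  · simp only [sKN, cKN, if_pos hK, sub_mul, sin_sub]; ring
  · simp [sKN, cKN]
  · simp only [sKN, cKN, if_neg hK.not_gt, if_neg hK.ne', sub_mul, sinh_sub]; ring

lemma cKN_add (hN : N < 0) (x y : ℝ) :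
    cKN K N (x + y) = cKN K N x * cKN K N y - K / N * (sKN K N x * sKN K N y) := by
  rcases lt_trichotomy K 0 with hK | rfl | hK
  · have hKN := div_pos_of_neg_of_neg hK hN
    simp only [sKN, cKN, if_pos hK, add_mul, cos_add]
    set a := √(K / N)
    have ha : a ≠ 0 := (sqrt_pos.2 hKN).ne'
    rw [← show a ^ 2 = K / N from sq_sqrt hKN.le]
    field_simp
  · simp [sKN, cKN]
  · have hKN := div_pos_of_neg_of_neg (neg_neg_of_pos hK) hN
    simp only [sKN, cKN, if_neg hK.not_gt, if_neg hK.ne', add_mul, cosh_add]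
    set a := √(-K / N)
    have ha : a ≠ 0 := (sqrt_pos.2 hKN).ne'
    rw [show K / N = -(-K / N) by ring, ← show a ^ 2 = -K / N from sq_sqrt hKN.le]
    field_simp
    ring

lemma cKN_sq_add_mul_sKN_sq (hN : N < 0) (x : ℝ) :
    cKN K N x ^ 2 + K / N * sKN K N x ^ 2 = 1 := by
  rcases lt_trichotomy K 0 with hK | rfl | hK
  · have hKN := div_pos_of_neg_of_neg hK hN
    simp only [sKN, cKN, if_pos hK]
    set a := √(K / N)
    have ha : a ≠ 0 := (sqrt_pos.2 hKN).ne'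
    rw [← show a ^ 2 = K / N from sq_sqrt hKN.le]
    field_simp
    linarith [cos_sq_add_sin_sq (x * a)]
  · simp [sKN, cKN]
  · have hKN := div_pos_of_neg_of_neg (neg_neg_of_pos hK) hN
    simp only [sKN, cKN, if_neg hK.not_gt, if_neg hK.ne']
    set a := √(-K / N)
    have ha : a ≠ 0 := (sqrt_pos.2 hKN).ne'
    rw [show K / N = -(-K / N) by ring, ← show a ^ 2 = -K / N from sq_sqrt hKN.le]
    field_simp
    linarith [cosh_sq_sub_sinh_sq (x * a)]

lemma sKN_zero : sKN K N 0 = 0 := by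
  have h := sKN_sub (K := K) (N := N) 0 0
  rw [sub_self] at h
  linarith

lemma cKN_eq_one_sub (hN : N < 0) (x : ℝ) :
    cKN K N x = 1 - 2 * (K / N) * sKN K N (x / 2) ^ 2 := by
  have h := cKN_add (K := K) hN (x / 2) (x / 2)
  rw [add_halves] at h
  linear_combination h + cKN_sq_add_mul_sKN_sq hN (x / 2)

lemma sKN_sq_sub_sq (hN : N < 0) (x y : ℝ) :
    sKN K N x ^ 2 - sKN K N y ^ 2 = sKN K N (x + y) * sKN K N (x - y) := by
  rw [sKN_add, sKN_sub]
  linear_combination sKN K N y ^ 2 * cKN_sq_add_mul_sKN_sq (K := K) hN x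
    - sKN K N x ^ 2 * cKN_sq_add_mul_sKN_sq (K := K) hN y

lemma sKN_mul_sKN_add_sub_sKN_mul_sKN_sub (x y u : ℝ) :
    sKN K N x * sKN K N (y + u) - sKN K N y * sKN K N (x - u) = sKN K N (x + y) * sKN K N u := by
  rw [sKN_add, sKN_sub, sKN_add]; ring

lemma sKN_add_eq_sub_half_sq (hN : N < 0) (p q : ℝ) :
    sKN K N (p + q) = sKN K N p + sKN K N q
      - 2 * (K / N) * (sKN K N q * sKN K N (p / 2) ^ 2 + sKN K N p * sKN K N (q / 2) ^ 2) := by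
  rw [sKN_add, cKN_eq_one_sub hN p, cKN_eq_one_sub hN q]; ring

lemma sKN_weighted_half_sq_sub_eq (hN : N < 0) (p q v : ℝ) :
    sKN K N q * sKN K N (v / 2) ^ 2 + sKN K N p * sKN K N ((p + q - v) / 2) ^ 2
      - (sKN K N q * sKN K N (p / 2) ^ 2 + sKN K N p * sKN K N (q / 2) ^ 2)
      = sKN K N (p + q) * sKN K N ((p - v) / 2) ^ 2 := by
  have h₀ : sKN K N (p / 2) ^ 2 - sKN K N (v / 2) ^ 2
      = sKN K N (p - (p - v) / 2) * sKN K N ((p - v) / 2) := by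
    rw [sKN_sq_sub_sq hN]; ring_nf
  have h₁ : sKN K N ((p + q - v) / 2) ^ 2 - sKN K N (q / 2) ^ 2
      = sKN K N (q + (p - v) / 2) * sKN K N ((p - v) / 2) := by
    rw [sKN_sq_sub_sq hN]; ring_nf
  linear_combination -sKN K N q * h₀ + sKN K N p * h₁
    + sKN K N ((p - v) / 2) * sKN_mul_sKN_add_sub_sKN_mul_sKN_sub p q ((p - v) / 2)

lemma mul_sqrt_div_le_pi (hN : N < 0) (hK : K < 0) {x : ℝ}
    (hx : x ≤ π * √(N / K)) : x * √(K / N) ≤ π := by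
  rwa [← inv_div K N, sqrt_inv, le_mul_inv_iff₀ (sqrt_pos.2 (div_pos_of_neg_of_neg hK hN))] at hx

lemma mul_sqrt_div_lt_pi (hN : N < 0) (hK : K < 0) {x : ℝ}
    (hx : x < π * √(N / K)) : x * √(K / N) < π := by
  rwa [← inv_div K N, sqrt_inv, lt_mul_inv_iff₀ (sqrt_pos.2 (div_pos_of_neg_of_neg hK hN))] at hx

lemma sKN_nonneg (hN : N < 0) {x : ℝ} (hx : 0 ≤ x) (hπ : K < 0 → x ≤ π * √(N / K)) :
    0 ≤ sKN K N x := by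
  rcases lt_trichotomy K 0 with hK | rfl | hK
  · simp only [sKN, if_pos hK]
    have ha := sqrt_pos.2 (div_pos_of_neg_of_neg hK hN)
    exact div_nonneg (sin_nonneg_of_nonneg_of_le_pi (by positivity)
      (mul_sqrt_div_le_pi hN hK (hπ hK))) ha.le
  · simpa [sKN] using hx
  · simp only [sKN, if_neg hK.not_gt, if_neg hK.ne']
    have ha := sqrt_pos.2 (div_pos_of_neg_of_neg (neg_neg_of_pos hK) hN)
    exact div_nonneg (sinh_nonneg_iff.2 (by positivity)) ha.le

lemma sKN_pos (hN : N < 0) {x : ℝ} (hx : 0 < x) (hπ : K < 0 → x < π * √(N / K)) :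
    0 < sKN K N x := by
  rcases lt_trichotomy K 0 with hK | rfl | hK
  · simp only [sKN, if_pos hK]
    have ha := sqrt_pos.2 (div_pos_of_neg_of_neg hK hN)
    exact div_pos (sin_pos_of_pos_of_lt_pi (by positivity)
      (mul_sqrt_div_lt_pi hN hK (hπ hK))) ha
  · simpa [sKN] using hx
  · simp only [sKN, if_neg hK.not_gt, if_neg hK.ne']
    have ha := sqrt_pos.2 (div_pos_of_neg_of_neg (neg_neg_of_pos hK) hN)
    exact div_pos (sinh_pos_iff.2 (by positivity)) ha

lemma continuous_sKN : Continuous (sKN K N) := by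
  change Continuous fun x => sKN K N x
  rcases lt_trichotomy K 0 with hK | rfl | hK
  · simp only [sKN, if_pos hK]; fun_prop
  · simp only [sKN, lt_irrefl, if_false, if_true]; fun_prop
  · simp only [sKN, if_neg hK.not_gt, if_neg hK.ne']; fun_prop

lemma sKN_half_sq_le_sKN_half_sq (hN : N < 0) {x y : ℝ} (hx : 0 ≤ x) (hxy : x ≤ y)
    (hπ : K < 0 → y ≤ π * √(N / K)) : sKN K N (x / 2) ^ 2 ≤ sKN K N (y / 2) ^ 2 := by
  rw [← sub_nonneg, sKN_sq_sub_sq hN]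
  refine mul_nonneg (sKN_nonneg hN (by linarith) fun hK => ?_) (sKN_nonneg hN (by linarith)
    fun hK => ?_) <;> linarith [hπ hK, mul_nonneg pi_pos.le (sqrt_nonneg (N / K))]

lemma sKN_half_sq_weighted_le (hN : N < 0) {p q d₀ d₁ : ℝ} (hp : 0 ≤ p) (hq : 0 ≤ q)
    (hpq : p + q ≤ d₀ + d₁) (hπ : K < 0 → p + q ≤ π * √(N / K))
    (hπ₀ : K < 0 → d₀ ≤ π * √(N / K)) (hπ₁ : K < 0 → d₁ ≤ π * √(N / K)) :
    sKN K N q * sKN K N (p / 2) ^ 2 + sKN K N p * sKN K N (q / 2) ^ 2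
      ≤ sKN K N q * sKN K N (d₀ / 2) ^ 2 + sKN K N p * sKN K N (d₁ / 2) ^ 2 := by
  have hsp : 0 ≤ sKN K N p := sKN_nonneg hN hp fun hK => by linarith [hπ hK]
  have hsq : 0 ≤ sKN K N q := sKN_nonneg hN hq fun hK => by linarith [hπ hK]
  have hcomp : ∀ v, sKN K N q * sKN K N (p / 2) ^ 2 + sKN K N p * sKN K N (q / 2) ^ 2
      ≤ sKN K N q * sKN K N (v / 2) ^ 2 + sKN K N p * sKN K N ((p + q - v) / 2) ^ 2 := fun v => by
    linarith [sKN_weighted_half_sq_sub_eq (K := K) hN p q v,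
      mul_nonneg (sKN_nonneg hN (add_nonneg hp hq) hπ) (sq_nonneg (sKN K N ((p - v) / 2)))]
  rcases le_total d₀ (p + q) with h | h
  · have := sKN_half_sq_le_sKN_half_sq hN (sub_nonneg.2 h) (by linarith : p + q - d₀ ≤ d₁) hπ₁
    linarith [hcomp d₀, mul_le_mul_of_nonneg_left this hsp]
  · have := sKN_half_sq_le_sKN_half_sq hN (add_nonneg hp hq) h hπ₀
    have h0 := hcomp (p + q)
    rw [sub_self, zero_div, sKN_zero] at h0
    linarith [mul_le_mul_of_nonneg_left this hsq, mul_nonneg hsp (sq_nonneg (sKN K N (d₁ / 2)))]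

end Trigonometry

section ExpN

variable {X : Type*} {f : X → EReal} {N : ℝ}

lemma fN_eq_exp (x : X) : fN f N x = EReal.exp (((-1 / N : ℝ) : EReal) * f x) := by
  rw [fN, eexp]
  induction ((-1 / N : ℝ) : EReal) * f x using EReal.rec <;> simp

lemma fN_lt_top (hN : N < 0) {x : X} (hx : f x ≠ ⊤) : fN f N x < ⊤ := by
  rw [fN_eq_exp, ← EReal.exp_top, EReal.exp_lt_exp_iff, lt_top_iff_ne_top, Ne, EReal.mul_eq_top]
  have : 0 < -1 / N := div_pos_of_neg_of_neg (by norm_num) hN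
  simp [hx, this.not_gt, EReal.coe_pos.2 this]

lemma fN_of_eq_bot (hN : N < 0) {x : X} (hx : f x = ⊥) : fN f N x = 0 := by
  rw [fN_eq_exp, hx, EReal.coe_mul_bot_of_pos (div_pos_of_neg_of_neg (by norm_num) hN),
    EReal.exp_bot]

lemma lt_fN_iff (hN : N < 0) {m : ℝ≥0∞} {x : X} :
    m < fN f N x ↔ ENNReal.log m / ((-1 / N : ℝ) : EReal) < f x := by
  have h : (0 : EReal) < ((-1 / N : ℝ) : EReal) :=
    EReal.coe_pos.2 (div_pos_of_neg_of_neg (by norm_num) hN)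
  rw [fN_eq_exp, ← ENNReal.log_lt_log_iff, EReal.log_exp, EReal.div_lt_iff h (EReal.coe_ne_top _),
    mul_comm]

lemma _root_.LowerSemicontinuous.fN [TopologicalSpace X] (hf : LowerSemicontinuous f) (hN : N < 0) :
    LowerSemicontinuous (fN f N) := fun x _ hm =>
  (hf x _ ((lt_fN_iff hN).1 hm)).mono fun _ hx => (lt_fN_iff hN).2 hx

end ExpN

section Dini

variable {φ ψ : ℝ → ℝ} {t b r : ℝ}

lemma eventually_slope_lt_of_diniUR_le (hφ : diniUR φ t ≤ b) (hr : b < r) :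
    ∀ᶠ h in 𝓝[>] 0, (φ (t + h) - φ t) / h < r :=
  (eventually_lt_of_limsup_lt (hφ.trans_lt (EReal.coe_lt_coe hr))).mono
    fun _ => EReal.coe_lt_coe_iff.1

lemma frequently_slope_lt_of_diniUR_le (hφ : diniUR φ t ≤ b) (hr : b < r) :
    ∃ᶠ z in 𝓝[>] t, slope φ t z < r := by
  have hsub : Tendsto (fun z => z - t) (𝓝[>] t) (𝓝[>] 0) :=
    tendsto_nhdsWithin_of_tendsto_nhds_of_eventually_within _
      (tendsto_nhdsWithin_of_tendsto_nhds (by simpa using (continuous_sub_right t).tendsto t))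
      (eventually_nhdsWithin_of_forall fun z hz => mem_Ioi.2 (sub_pos.2 hz))
  refine ((hsub.eventually (eventually_slope_lt_of_diniUR_le hφ hr)).mono fun z hz => ?_).frequently
  rwa [add_sub_cancel, ← slope_def_field] at hz

lemma diniUR_le_of_eventually_le (hφ : ∀ r, b < r → ∀ᶠ h in 𝓝[>] 0, (φ (t + h) - φ t) / h ≤ r) :
    diniUR φ t ≤ b := by
  refine EReal.le_of_forall_lt_iff_le.1 fun r hr => limsup_le_of_le ?_ ?_
  · isBoundedDefault
  · exact (hφ r (EReal.coe_lt_coe_iff.1 hr)).mono fun _ => EReal.coe_le_coe_iff.2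

lemma diniUR_mul_add_mul_le {a₀ a₁ b₀ b₁ : ℝ} (ha₀ : 0 ≤ a₀) (ha₁ : 0 ≤ a₁)
    (hφ : diniUR φ t ≤ b₀) (hψ : diniUR ψ t ≤ b₁) :
    diniUR (fun τ => a₀ * φ τ + a₁ * ψ τ) t ≤ ((a₀ * b₀ + a₁ * b₁ : ℝ) : EReal) := by
  refine diniUR_le_of_eventually_le fun r hr => ?_
  obtain ⟨ε, hε, hεr⟩ := exists_pos_mul_lt (sub_pos.2 hr) (a₀ + a₁)
  filter_upwards [eventually_slope_lt_of_diniUR_le hφ (lt_add_of_pos_right b₀ hε),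
    eventually_slope_lt_of_diniUR_le hψ (lt_add_of_pos_right b₁ hε)] with h h₀ h₁
  have : (a₀ * φ (t + h) + a₁ * ψ (t + h) - (a₀ * φ t + a₁ * ψ t)) / h
      = a₀ * ((φ (t + h) - φ t) / h) + a₁ * ((ψ (t + h) - ψ t) / h) := by ring
  rw [this]
  linarith [mul_le_mul_of_nonneg_left h₀.le ha₀, mul_le_mul_of_nonneg_left h₁.le ha₁]

lemma le_sub_mul_of_diniUR_le {δ c L : ℝ} (hcont : ContinuousOn φ (Ioo 0 δ))
    (hL : Tendsto φ (𝓝[>] 0) (𝓝 L)) (hφ : ∀ t ∈ Ioo 0 δ, diniUR φ t ≤ ((-c : ℝ) : EReal))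
    (ht : t ∈ Ioo 0 δ) : φ t ≤ L - c * t := by
  have hfence : ∀ t₀ ∈ Ioo 0 t, φ t ≤ φ t₀ - c * (t - t₀) := fun t₀ ht₀ => by
    have hsub : Icc t₀ t ⊆ Ioo 0 δ := fun τ hτ => ⟨ht₀.1.trans_le hτ.1, hτ.2.trans_lt ht.2⟩
    refine image_le_of_liminf_slope_right_le_deriv_boundary (B := fun τ => φ t₀ - c * (τ - t₀))
      (B' := fun _ => -c) (hcont.mono hsub) (by simp)
      (by fun_prop) (fun x _ => ?_) (fun x hx r hr => ?_) (right_mem_Icc.2 ht₀.2.le)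
    · simpa using
        ((hasDerivAt_id x).sub_const t₀ |>.const_mul c |>.const_sub (φ t₀)).hasDerivWithinAt
    · exact frequently_slope_lt_of_diniUR_le (hφ x (hsub (Ico_subset_Icc_self hx))) hr
  refine ge_of_tendsto (hL.sub (tendsto_nhdsWithin_of_tendsto_nhds
    (by simpa using ((continuous_const.sub continuous_id).const_mul c).tendsto (0 : ℝ)
      : Tendsto (fun t₀ => c * (t - t₀)) (𝓝 0) (𝓝 (c * t))))) ?_
  filter_upwards [Ioo_mem_nhdsGT ht.1] with t₀ ht₀ using hfence t₀ ht₀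

end Dini

section Metric

variable {X : Type*} [MetricSpace X] {f : X → EReal} {K N : ℝ}

lemma IsGeodesic.dist_apply_zero {γ : ℝ → X} (hγ : IsGeodesic γ) {s : ℝ} (hs : s ∈ Icc (0 : ℝ) 1) :
    dist (γ s) (γ 0) = s * dist (γ 0) (γ 1) := by
  rw [hγ s hs 0 ⟨le_rfl, zero_le_one⟩, zero_sub, abs_neg, abs_of_nonneg hs.1]

lemma IsGeodesic.dist_apply_one {γ : ℝ → X} (hγ : IsGeodesic γ) {s : ℝ} (hs : s ∈ Icc (0 : ℝ) 1) :
    dist (γ s) (γ 1) = (1 - s) * dist (γ 0) (γ 1) := by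
  rw [hγ s hs 1 ⟨zero_le_one, le_rfl⟩, abs_of_nonneg (sub_nonneg.2 hs.2)]

lemma sigmaKN_zero_right (t : ℝ) : sigmaKN K N t 0 = ENNReal.ofReal t := by
  simp [sigmaKN]

lemma sigmaKN_eq_ofReal_div (hN : N < 0) {θ : ℝ} (hθ : 0 < θ) (hθπ : K < 0 → θ < π * √(N / K))
    (t : ℝ) :
    sigmaKN K N t θ = ENNReal.ofReal (sKN K N (t * θ) / sKN K N θ) := by
  rcases lt_trichotomy K 0 with hK | rfl | hK
  · have hθa := mul_sqrt_div_lt_pi hN hK (hθπ hK)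
    have hlow : N * π ^ 2 < K * θ ^ 2 :=
      calc N * π ^ 2 < N * (θ * √(K / N)) ^ 2 := mul_lt_mul_of_neg_left (by gcongr) hN
        _ = K * θ ^ 2 := by
          rw [mul_pow, sq_sqrt (div_pos_of_neg_of_neg hK hN).le]; field_simp [hN.ne]
    rw [sigmaKN, if_pos (Or.inl ⟨hlow, mul_neg_of_neg_of_pos hK (by positivity)⟩)]
  · simp [sigmaKN, sKN, hθ.ne']
  · rw [sigmaKN, if_pos (Or.inr (by positivity))]

def sKNPotential (K N a₀ a₁ : ℝ) (x₀ x₁ u : X) : ℝ :=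
  a₀ * sKN K N (dist u x₀ / 2) ^ 2 + a₁ * sKN K N (dist u x₁ / 2) ^ 2

lemma continuous_sKNPotential (a₀ a₁ : ℝ) (x₀ x₁ : X) :
    Continuous (sKNPotential K N a₀ a₁ x₀ x₁) := by
  have := continuous_sKN (K := K) (N := N)
  unfold sKNPotential
  fun_prop

lemma exists_pos_lt_of_ofReal_lt_ofReal_mul {S σ : ℝ} {F : ℝ≥0∞} (hS : 0 ≤ S)
    (h : ENNReal.ofReal S < ENNReal.ofReal σ * F) :
    ∃ m : ℝ, 0 < m ∧ S < σ * m ∧ ENNReal.ofReal m < F := by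
  have hσ : 0 < σ := by
    by_contra! hσ
    simp [ENNReal.ofReal_of_nonpos hσ] at h
  have hF : ENNReal.ofReal (S / σ) < F := by
    by_contra! hF
    refine h.not_ge ?_
    calc ENNReal.ofReal σ * F ≤ ENNReal.ofReal σ * ENNReal.ofReal (S / σ) := by gcongr
      _ = ENNReal.ofReal S := by rw [← ENNReal.ofReal_mul hσ.le, mul_div_cancel₀ _ hσ.ne']
  obtain ⟨m, -, hSm, hmF⟩ := ENNReal.lt_iff_exists_real_btwn.1 hF
  have hSm := (ENNReal.ofReal_lt_ofReal_iff_of_nonneg (div_nonneg hS hσ.le)).1 hSm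
  exact ⟨m, (div_nonneg hS hσ.le).trans_lt hSm, (div_lt_iff₀' hσ).1 hSm, hmF⟩

lemma eventually_mem_domT {T : ℝ≥0∞} (hT : 0 < T) : ∀ᶠ t in 𝓝[>] (0 : ℝ), t ∈ domT T := by
  have hlim : Tendsto ENNReal.ofReal (𝓝[>] 0) (𝓝 0) := by
    simpa using (ENNReal.continuous_ofReal.tendsto 0).mono_left nhdsWithin_le_nhds
  filter_upwards [self_mem_nhdsWithin, hlim.eventually_lt_const hT] with t ht hTt using ⟨ht, hTt⟩

lemma StartsAt.eventually_dist_lt {P : Prop} {y : ℝ → X} {z x : X} {B : ℝ} (hz : StartsAt y z)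
    (h : P → dist z x < B) : ∀ᶠ t in 𝓝[>] (0 : ℝ), P → dist (y t) x < B := by
  by_cases hP : P
  · exact (((continuous_id.dist continuous_const).tendsto z).comp hz |>.eventually_lt_const
      (h hP)).mono fun _ ht _ => ht
  · exact .of_forall fun _ h => absurd h hP

lemma IsEVIKN.diniUR_sKN_half_sq_le {T : ℝ≥0∞} {y : ℝ → X} (hy : IsEVIKN f K N T y)
    (hN : N < 0) {t : ℝ} (ht : t ∈ domT T) {x : X} (hx : x ∈ closure (Dom f)) (hfx : f x ≠ ⊤)
    (hπ : K < 0 → dist (y t) x < π * √(N / K)) {m : ℝ} (hm : 0 < m)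
    (hmy : ENNReal.ofReal m ≤ fN f N (y t)) :
    diniUR (fun τ => sKN K N (dist (y τ) x / 2) ^ 2) t
      ≤ ((N / 2 * (1 - (fN f N x).toReal / m) - K * sKN K N (dist (y t) x / 2) ^ 2 : ℝ) :
          EReal) := by
  have hρ : fN f N x / fN f N (y t) ≤ ENNReal.ofReal ((fN f N x).toReal / m) := by
    rw [ENNReal.ofReal_div_of_pos hm, ENNReal.ofReal_toReal (fN_lt_top hN hfx).ne]
    exact ENNReal.div_le_div_left hmy _
  have hρle := ENNReal.toReal_le_of_le_ofReal (by positivity) hρ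
  have hevi := hy.2.2.2 t ht x hx hπ
  rw [← EReal.coe_ennreal_toReal (ne_top_of_le_ne_top ENNReal.ofReal_ne_top hρ), ← EReal.coe_one,
    ← EReal.coe_sub, ← EReal.coe_mul] at hevi
  rw [EReal.coe_sub,
    EReal.le_sub_iff_add_le (.inl (EReal.coe_ne_bot _)) (.inl (EReal.coe_ne_top _))]
  exact hevi.trans (EReal.coe_le_coe_iff.2 (by nlinarith))

lemma IsEVIKN.diniUR_sKNPotential_le {T : ℝ≥0∞} {y : ℝ → X} (hy : IsEVIKN f K N T y)
    (hN : N < 0) {a₀ a₁ : ℝ} (ha₀ : 0 ≤ a₀) (ha₁ : 0 ≤ a₁) {x₀ x₁ : X}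
    (hx₀ : x₀ ∈ closure (Dom f)) (hx₁ : x₁ ∈ closure (Dom f)) (hf₀ : f x₀ ≠ ⊤) (hf₁ : f x₁ ≠ ⊤)
    {t : ℝ} (ht : t ∈ domT T) (hπ₀ : K < 0 → dist (y t) x₀ < π * √(N / K))
    (hπ₁ : K < 0 → dist (y t) x₁ < π * √(N / K)) {m : ℝ} (hm : 0 < m)
    (hmy : ENNReal.ofReal m ≤ fN f N (y t)) :
    diniUR (fun τ => sKNPotential K N a₀ a₁ x₀ x₁ (y τ)) t
      ≤ ((N / 2 * (a₀ + a₁) - N / 2 * (a₀ * (fN f N x₀).toReal + a₁ * (fN f N x₁).toReal) / m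
          - K * sKNPotential K N a₀ a₁ x₀ x₁ (y t) : ℝ) : EReal) := by
  refine (diniUR_mul_add_mul_le ha₀ ha₁ (hy.diniUR_sKN_half_sq_le hN ht hx₀ hf₀ hπ₀ hm hmy)
    (hy.diniUR_sKN_half_sq_le hN ht hx₁ hf₁ hπ₁ hm hmy)).trans_eq ?_
  rw [sKNPotential]
  ring_nf

lemma IsEVIKN.ofReal_mul_fN_le {T : ℝ≥0∞} {y : ℝ → X} (hy : IsEVIKN f K N T y) {z : X}
    (hz : StartsAt y z) (hf : LowerSemicontinuous f) (hN : N < 0) {a₀ a₁ : ℝ} (ha₀ : 0 ≤ a₀)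
    (ha₁ : 0 ≤ a₁) {x₀ x₁ : X} (hx₀ : x₀ ∈ closure (Dom f)) (hx₁ : x₁ ∈ closure (Dom f))
    (hf₀ : f x₀ ≠ ⊤) (hf₁ : f x₁ ≠ ⊤) (hz₀ : K < 0 → dist z x₀ < π * √(N / K))
    (hz₁ : K < 0 → dist z x₁ < π * √(N / K))
    (hmin : ∀ u, (K < 0 → dist u x₀ ≤ π * √(N / K)) → (K < 0 → dist u x₁ ≤ π * √(N / K)) →
      sKNPotential K N a₀ a₁ x₀ x₁ z ≤ sKNPotential K N a₀ a₁ x₀ x₁ u) :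
    ENNReal.ofReal (a₀ + a₁ - 2 * (K / N) * sKNPotential K N a₀ a₁ x₀ x₁ z) * fN f N z
      ≤ ENNReal.ofReal a₀ * fN f N x₀ + ENNReal.ofReal a₁ * fN f N x₁ := by
  set G := sKNPotential K N a₀ a₁ x₀ x₁
  set σ := a₀ + a₁ - 2 * (K / N) * G z
  set S := a₀ * (fN f N x₀).toReal + a₁ * (fN f N x₁).toReal
  have hS : 0 ≤ S := by positivity
  rw [← ENNReal.ofReal_toReal (fN_lt_top hN hf₀).ne, ← ENNReal.ofReal_toReal (fN_lt_top hN hf₁).ne,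
    ← ENNReal.ofReal_mul ha₀, ← ENNReal.ofReal_mul ha₁, ← ENNReal.ofReal_add (by positivity)
    (by positivity)]
  by_contra! hlt
  obtain ⟨m, hm, hSm, hmz⟩ := exists_pos_lt_of_ofReal_lt_ofReal_mul hS hlt
  set ε := N / 2 * (S / m - σ)
  have hε : 0 < ε := mul_pos_of_neg_of_neg (by linarith) (by rw [sub_neg, div_lt_iff₀ hm]; linarith)
  have hGz : Tendsto (fun t => G (y t)) (𝓝[>] 0) (𝓝 (G z)) :=
    ((continuous_sKNPotential a₀ a₁ x₀ x₁).tendsto z).comp hz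
  have hKG : Tendsto (fun t => K * (G z - G (y t))) (𝓝[>] 0) (𝓝 0) := by
    simpa using ((tendsto_const_nhds (x := G z)).sub hGz).const_mul K
  obtain ⟨δ, hδ, hgood⟩ := mem_nhdsGT_iff_exists_Ioo_subset.1 <|
    (eventually_mem_domT hy.1).and <| (hz.eventually ((hf.fN hN) z _ hmz)).and <|
    (hKG.eventually_lt_const (half_pos hε)).and <|
    (hz.eventually_dist_lt hz₀).and (hz.eventually_dist_lt hz₁)
  have hdini : ∀ t ∈ Ioo 0 δ, diniUR (fun τ => G (y τ)) t ≤ ((-(ε / 2) : ℝ) : EReal) := by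
    intro t ht
    obtain ⟨htT, hmy, hKt, hπ₀, hπ₁⟩ := hgood ht
    refine (hy.diniUR_sKNPotential_le hN ha₀ ha₁ hx₀ hx₁ hf₀ hf₁ htT hπ₀ hπ₁ hm hmy.le).trans
      (EReal.coe_le_coe_iff.2 ?_)
    change N / 2 * (a₀ + a₁) - N / 2 * S / m - K * G (y t) ≤ -(ε / 2)
    have hσ : N / 2 * σ = N / 2 * (a₀ + a₁) - K * G z := by simp only [σ]; field_simp [hN.ne]
    have hεdef : ε = N / 2 * (S / m) - N / 2 * σ := by ring
    have hSm' : N / 2 * S / m = N / 2 * (S / m) := by ring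
    linarith
  have ht : δ / 2 ∈ Ioo 0 δ := ⟨half_pos hδ, half_lt_self hδ⟩
  have hdecay := le_sub_mul_of_diniUR_le ((continuous_sKNPotential a₀ a₁ x₀ x₁).comp_continuousOn
    (hy.2.1.mono fun t ht => (hgood ht).1)) hGz hdini ht
  obtain ⟨-, -, -, hπ₀, hπ₁⟩ := hgood ht
  have := hmin (y (δ / 2)) (fun hK => (hπ₀ hK).le) (fun hK => (hπ₁ hK).le)
  change G (y (δ / 2)) ≤ _ at hdecay
  linarith [mul_pos (half_pos hε) (half_pos hδ)]

lemma IsEVIKN.fN_le_sigmaKN {T : ℝ≥0∞} {y : ℝ → X} (hy : IsEVIKN f K N T y)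
    (hf : LowerSemicontinuous f) (hN : N < 0) {γ : ℝ → X} (hγ : IsGeodesic γ)
    (hθ : 0 < dist (γ 0) (γ 1)) (hθπ : K < 0 → dist (γ 0) (γ 1) < π * √(N / K))
    (h₀ : γ 0 ∈ closure (Dom f)) (h₁ : γ 1 ∈ closure (Dom f)) (hf₀ : f (γ 0) ≠ ⊤)
    (hf₁ : f (γ 1) ≠ ⊤) {s : ℝ} (hs : s ∈ Icc (0 : ℝ) 1) (hys : StartsAt y (γ s)) :
    fN f N (γ s) ≤ sigmaKN K N (1 - s) (dist (γ 0) (γ 1)) * fN f N (γ 0)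
      + sigmaKN K N s (dist (γ 0) (γ 1)) * fN f N (γ 1) := by
  set θ := dist (γ 0) (γ 1)
  have hp : 0 ≤ s * θ := mul_nonneg hs.1 hθ.le
  have hq : 0 ≤ (1 - s) * θ := mul_nonneg (sub_nonneg.2 hs.2) hθ.le
  have hpq : s * θ + (1 - s) * θ = θ := by ring
  have hπ : ∀ r ≤ θ, K < 0 → r ≤ π * √(N / K) := fun r hr hK => hr.trans (hθπ hK).le
  have hsθ := sKN_pos hN hθ hθπ
  have key := hy.ofReal_mul_fN_le hys hf hN (a₀ := sKN K N ((1 - s) * θ)) (a₁ := sKN K N (s * θ))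
    (sKN_nonneg hN hq (hπ _ (by linarith))) (sKN_nonneg hN hp (hπ _ (by linarith))) h₀ h₁ hf₀ hf₁
    (by rw [hγ.dist_apply_zero hs]; exact fun hK => (hθπ hK).trans_le' (by linarith))
    (by rw [hγ.dist_apply_one hs]; exact fun hK => (hθπ hK).trans_le' (by linarith))
    (fun u hu₀ hu₁ => by
      simp only [sKNPotential, hγ.dist_apply_zero hs, hγ.dist_apply_one hs]
      refine sKN_half_sq_weighted_le hN hp hq ?_ (by rw [hpq]; exact hπ θ le_rfl) hu₀ hu₁
      rw [hpq, dist_comm u]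
      exact dist_triangle _ _ _)
  have hσ : sKN K N ((1 - s) * θ) + sKN K N (s * θ)
      - 2 * (K / N) * (sKN K N ((1 - s) * θ) * sKN K N (s * θ / 2) ^ 2
        + sKN K N (s * θ) * sKN K N ((1 - s) * θ / 2) ^ 2) = sKN K N θ := by
    rw [← congrArg (sKN K N) hpq, sKN_add_eq_sub_half_sq hN]; ring
  rw [sKNPotential, hγ.dist_apply_zero hs, hγ.dist_apply_one hs, hσ] at key
  rw [sigmaKN_eq_ofReal_div hN hθ hθπ, sigmaKN_eq_ofReal_div hN hθ hθπ,
    ENNReal.ofReal_div_of_pos hsθ, ENNReal.ofReal_div_of_pos hsθ, ← ENNReal.mul_div_right_comm,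
    ← ENNReal.mul_div_right_comm, ENNReal.div_add_div_same,
    ENNReal.le_div_iff_mul_le (.inl (by simpa using hsθ))
    (.inl ENNReal.ofReal_ne_top), mul_comm]
  exact key

end Metric

end KNPaper

theorem stmt_15 {X : Type*} [MetricSpace X]
    (hgeo : ∀ x₀ x₁ : X, ∃ γ : ℝ → X, KNPaper.IsGeodesic γ ∧ γ 0 = x₀ ∧ γ 1 = x₁)
    (f : X → EReal) (hlsc : LowerSemicontinuous f) (hdense : Dense (KNPaper.Dom f))
    (K N : ℝ) (hN : N < 0)
    (hex : ∀ y₀ : X, f y₀ ≠ ⊥ → ∃ (T : ℝ≥0∞) (y : ℝ → X),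
      KNPaper.IsEVIKN f K N T y ∧ KNPaper.StartsAt y y₀) :
    KNPaper.KNConvex f K N := by
  intro x₀ _ x₁ _ hf₀ hf₁ hθπ
  obtain ⟨γ, hγ, rfl, rfl⟩ := hgeo x₀ x₁
  refine ⟨γ, hγ, fun _ _ => mem_univ _, rfl, rfl, fun s hs => ?_⟩
  rcases (dist_nonneg (x := γ 0) (y := γ 1)).eq_or_lt with hθ | hθ
  · have h₀ : γ s = γ 0 := dist_eq_zero.1 (by rw [hγ.dist_apply_zero hs, ← hθ, mul_zero])
    rw [← hθ, KNPaper.sigmaKN_zero_right, KNPaper.sigmaKN_zero_right, h₀,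
      dist_eq_zero.1 hθ.symm, ← add_mul, ← ENNReal.ofReal_add (sub_nonneg.2 hs.2) hs.1,
      sub_add_cancel, ENNReal.ofReal_one, one_mul]
  rcases eq_or_ne (f (γ s)) ⊥ with hbot | hbot
  · simp [KNPaper.fN_of_eq_bot hN hbot]
  obtain ⟨T, y, hy, hys⟩ := hex (γ s) hbot
  exact hy.fN_le_sigmaKN hlsc hN hγ hθ hθπ (by simp [hdense.closure_eq])
    (by simp [hdense.closure_eq]) hf₀ hf₁ hs hys
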